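/- arXiv:1711.06739 — 2 statements merged into one kernel-verified Lean document; each statement's English description precedes it below -/
import Mathlib

section
/- Define an equivalence relation ∼ on G×G generated by (g,1) ∼ (1,1) ∼ (1,g), (g,g⁻¹) ∼ (g⁻¹,g), and (g,h) ∼ (h, h⁻¹g⁻¹) ∼ (h⁻¹, g⁻¹) for g ≠ 1 ≠ h ≠ g⁻¹. Then the group of pre-cocycles pZ²(G,A) is isomorphic to the group A^Ω of all functions from the quotient Ω = (G×G)/∼ to A. -/
variable (G : Type*) [Group G] (A : Type*) [AddCommGroup A]

/-- The coboundary `δ²σ(x,y,z) = σ(y,z) − σ(xy,z) + σ(x,yz) − σ(x,y)`. -/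
def d2 (σ : G → G → A) (x y z : G) : A :=
  σ y z - σ (x * y) z + σ x (y * z) - σ x y

variable {G A}

/-- A pre-cocycle: `δ²σ(x,y,z) = 0` whenever `1 ∈ {x,y,z,xy,yz,xyz}`. -/
def IsPreCocycle (σ : G → G → A) : Prop :=
  ∀ x y z : G, (1 : G) ∈ ({x, y, z, x * y, y * z, x * y * z} : Set G) →
    d2 G A σ x y z = 0

variable (G A)

/-- The group `pZ²(G,A)` of pre-cocycles under pointwise addition. -/
def preZ2 : AddSubgroup (G → G → A) where
  carrier := {σ | IsPreCocycle σ}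
  zero_mem' := by intro x y z _; simp [d2]
  add_mem' := by
    intro σ τ hσ hτ x y z h
    have h1 := hσ x y z h
    have h2 := hτ x y z h
    simp only [d2, Pi.add_apply] at *
    linear_combination (norm := abel1) h1 + h2
  neg_mem' := by
    intro σ hσ x y z h
    have h1 := hσ x y z h
    simp only [d2, Pi.neg_apply] at *
    linear_combination (norm := abel1) -h1

/-- The generating relation `∼` on `G × G`. -/
inductive pairRel : G × G → G × G → Prop
  | left (g : G) : pairRel (g, 1) (1, 1)
  | right (g : G) : pairRel (1, g) (1, 1)
  | inv (g : G) : pairRel (g, g⁻¹) (g⁻¹, g)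
  | cyc (g h : G) : g ≠ 1 → h ≠ 1 → h ≠ g⁻¹ →
      pairRel (g, h) (h, h⁻¹ * g⁻¹)
  | swap (g h : G) : g ≠ 1 → h ≠ 1 → h ≠ g⁻¹ →
      pairRel (g, h) (h⁻¹, g⁻¹)

/-!
Away from the pairs `(g, 1)`, `(1, g)` and `(g, g⁻¹)`, the pre-cocycle identities say exactly that
`ν(g, h) = σ(g, h) + σ(gh, (gh)⁻¹)` is invariant under the rotation `(g, h) ↦ (h, (gh)⁻¹)` and that
`ν(h⁻¹, g⁻¹) + ν(g, h) = σ(1, 1) + σ(g, g⁻¹) + σ(h, h⁻¹) + σ(gh, (gh)⁻¹)`; on the excluded pairs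
they say that `σ` is constant on `(g, 1) ∼ (1, 1) ∼ (1, g)` and symmetric on `(g, g⁻¹) ∼ (g⁻¹, g)`.
The class of a generic pair is a rotation triangle together with its reverse, and the two are
distinct. Choosing a representative of each class therefore orients it, and a pre-cocycle is freely
determined by its values on the classes of `(1, 1)` and `(g, g⁻¹)` and by `ν` at the chosen
representatives of the generic classes.
-/

theorem Relation.EqvGen.iff_of_invariant {α : Type*} {r : α → α → Prop} {P : α → Prop}
    (hP : ∀ a b, r a b → (P a ↔ P b)) {a b : α} (h : Relation.EqvGen r a b) : P a ↔ P b :=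
  (Equivalence.eqvGen_iff (r := fun a b => P a ↔ P b) ⟨fun _ => Iff.rfl, Iff.symm, Iff.trans⟩).1
    (h.mono hP)

theorem Relation.EqvGen.rel_of_invariant {α : Type*} {r s : α → α → Prop} {P : α → Prop}
    (hs : Equivalence s) (hP : ∀ a b, r a b → (P a ↔ P b)) (hrs : ∀ a b, r a b → P a → s a b)
    {a b : α} (h : Relation.EqvGen r a b) (ha : P a) : s a b := by
  induction h with
  | rel a b hab => exact hrs a b hab ha
  | refl => exact hs.refl _
  | symm _ _ hab ih => exact hs.symm (ih ((hab.iff_of_invariant hP).2 ha))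
  | trans _ _ _ hab _ ih₁ ih₂ => exact hs.trans (ih₁ ha) (ih₂ ((hab.iff_of_invariant hP).1 ha))

namespace PreZ2

variable {G A} {σ : G → G → A}

/-- Cycles the triple `(g, h, (gh)⁻¹)` of product one. -/
def rot (p : G × G) : G × G := (p.2, p.2⁻¹ * p.1⁻¹)

def rev (p : G × G) : G × G := (p.2⁻¹, p.1⁻¹)

def IsGeneric (p : G × G) : Prop := p.1 ≠ 1 ∧ p.2 ≠ 1 ∧ p.2 ≠ p.1⁻¹

@[simp] lemma rot_mk (g h : G) : rot (g, h) = (h, h⁻¹ * g⁻¹) := rfl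

@[simp] lemma rev_mk (g h : G) : rev (g, h) = (h⁻¹, g⁻¹) := rfl

lemma iterate_rot_three : rot^[3] = (id : G × G → G × G) := by
  funext ⟨g, h⟩
  simp [mul_assoc]

@[simp] lemma rev_rev (p : G × G) : rev (rev p) = p := by
  obtain ⟨g, h⟩ := p
  simp

lemma rot_rev_rot (p : G × G) : rot (rev (rot p)) = rev p := by
  obtain ⟨g, h⟩ := p
  simp

lemma IsGeneric.rot {p : G × G} (hp : IsGeneric p) : IsGeneric (rot p) := by
  obtain ⟨g, h⟩ := p
  obtain ⟨hg, hh, hgh⟩ := hp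
  refine ⟨hh, ?_, ?_⟩
  · intro e
    rw [rot_mk, ← mul_inv_rev, inv_eq_one] at e
    exact hgh (eq_inv_of_mul_eq_one_right e)
  · simpa using hg

lemma IsGeneric.rev {p : G × G} (hp : IsGeneric p) : IsGeneric (rev p) := by
  obtain ⟨g, h⟩ := p
  obtain ⟨hg, hh, hgh⟩ := hp
  refine ⟨inv_ne_one.2 hh, inv_ne_one.2 hg, fun e => hgh ?_⟩
  simpa using e.symm

lemma not_isGeneric_inv (g : G) : ¬IsGeneric (g, g⁻¹) := fun h => h.2.2 rfl

def SameTriangle (p q : G × G) : Prop := ∃ n, rot^[n] p = q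

lemma sameTriangle_rot (p : G × G) : SameTriangle p (rot p) := ⟨1, rfl⟩

lemma sameTriangle_equivalence : Equivalence (SameTriangle (G := G)) where
  refl p := ⟨0, rfl⟩
  symm := by
    rintro p _ ⟨n, rfl⟩
    refine ⟨2 * n, ?_⟩
    rw [← Function.iterate_add_apply, show 2 * n + n = 3 * n by ring, Function.iterate_mul,
      iterate_rot_three, Function.iterate_id, id]
  trans := by
    rintro p _ _ ⟨m, rfl⟩ ⟨n, rfl⟩
    exact ⟨n + m, Function.iterate_add_apply _ _ _ _⟩

lemma SameTriangle.rev {p q : G × G} (h : SameTriangle p q) : SameTriangle (rev q) (rev p) := by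
  obtain ⟨n, rfl⟩ := h
  refine ⟨n, ?_⟩
  induction n generalizing p with
  | zero => rfl
  | succ n ih =>
    rw [Function.iterate_succ_apply, Function.iterate_succ_apply', rot_rev_rot, ih]

lemma SameTriangle.apply_eq {β : Type*} {φ : G × G → β} (hφ : ∀ p, φ (rot p) = φ p)
    {p q : G × G} (h : SameTriangle p q) : φ q = φ p := by
  obtain ⟨n, rfl⟩ := h
  induction n with
  | zero => rfl
  | succ n ih => rw [Function.iterate_succ_apply', hφ, ih]

lemma not_sameTriangle_rev {p : G × G} (hp : IsGeneric p) :
    ¬SameTriangle p (rev p) := by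
  obtain ⟨g, h⟩ := p
  obtain ⟨hg, hh, hgh⟩ := hp
  rintro ⟨n, hn⟩
  have hper : Function.IsPeriodicPt rot 3 (g, h) := congrFun iterate_rot_three (g, h)
  rw [← hper.iterate_mod_apply] at hn
  have : n % 3 < 3 := Nat.mod_lt _ (by norm_num)
  interval_cases n % 3 <;> simp [Prod.ext_iff] at hn
  exacts [hgh hn.2, hh hn.2, hg hn.1]

def SameOrbit (p q : G × G) : Prop := SameTriangle p q ∨ SameTriangle p (rev q)

lemma sameOrbit_equivalence : Equivalence (SameOrbit (G := G)) := by
  have e := sameTriangle_equivalence (G := G)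
  refine ⟨fun p => Or.inl (e.refl p), ?_, ?_⟩
  · rintro p q (h | h)
    · exact Or.inl (e.symm h)
    · exact Or.inr (by simpa using h.rev)
  · rintro p q r (h₁ | h₁) (h₂ | h₂)
    · exact Or.inl (e.trans h₁ h₂)
    · exact Or.inr (e.trans h₁ h₂)
    · exact Or.inr (e.trans h₁ (e.symm h₂.rev))
    · exact Or.inl (e.trans h₁ (by simpa using e.symm h₂.rev))

lemma isGeneric_iff_of_pairRel {p q : G × G} (h : pairRel G p q) : IsGeneric p ↔ IsGeneric q := by
  cases h with
  | left g => simp [IsGeneric]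
  | right g => simp [IsGeneric]
  | inv g => simp [IsGeneric]
  | cyc g h hg hh hgh =>
    exact iff_of_true ⟨hg, hh, hgh⟩ (IsGeneric.rot (p := (g, h)) ⟨hg, hh, hgh⟩)
  | swap g h hg hh hgh =>
    exact iff_of_true ⟨hg, hh, hgh⟩ (IsGeneric.rev (p := (g, h)) ⟨hg, hh, hgh⟩)

lemma sameOrbit_of_pairRel {p q : G × G} (h : pairRel G p q) (hp : IsGeneric p) :
    SameOrbit p q := by
  cases h with
  | left g => exact absurd rfl hp.2.1
  | right g => exact absurd rfl hp.1
  | inv g => exact absurd rfl hp.2.2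
  | cyc g h => exact Or.inl (sameTriangle_rot _)
  | swap g h => exact Or.inr ⟨0, by simp⟩

lemma isGeneric_iff_of_mk_eq {p q : G × G} (h : Quot.mk (pairRel G) p = Quot.mk _ q) :
    IsGeneric p ↔ IsGeneric q :=
  (Quot.eqvGen_exact h).iff_of_invariant fun _ _ h => isGeneric_iff_of_pairRel h

lemma sameOrbit_of_mk_eq {p q : G × G} (hp : IsGeneric p)
    (h : Quot.mk (pairRel G) p = Quot.mk _ q) : SameOrbit p q :=
  (Quot.eqvGen_exact h).rel_of_invariant sameOrbit_equivalence
    (fun _ _ h => isGeneric_iff_of_pairRel h) (fun _ _ h => sameOrbit_of_pairRel h) hp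

lemma mk_rot {p : G × G} (hp : IsGeneric p) : Quot.mk (pairRel G) (rot p) = Quot.mk _ p :=
  (Quot.sound (pairRel.cyc p.1 p.2 hp.1 hp.2.1 hp.2.2)).symm

lemma mk_rev {p : G × G} (hp : IsGeneric p) : Quot.mk (pairRel G) (rev p) = Quot.mk _ p :=
  (Quot.sound (pairRel.swap p.1 p.2 hp.1 hp.2.1 hp.2.2)).symm

def invVal {β : Type*} (σ : G → G → β) (g : G) : β := σ g g⁻¹

def nu (σ : G → G → A) (p : G × G) : A := σ p.1 p.2 + invVal σ (p.1 * p.2)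

def nuTotal (σ : G → G → A) (p : G × G) : A :=
  σ 1 1 + invVal σ p.1 + invVal σ p.2 + invVal σ (p.1 * p.2)

lemma invVal_inv {β : Type*} {τ : G → G → β} (hinv : ∀ g, τ g⁻¹ g = τ g g⁻¹) (g : G) :
    invVal τ g⁻¹ = invVal τ g := by
  simp [invVal, hinv]

lemma nuTotal_rot (hinv : ∀ g, σ g⁻¹ g = σ g g⁻¹) (p : G × G) :
    nuTotal σ (rot p) = nuTotal σ p := by
  obtain ⟨g, h⟩ := p
  simp only [nuTotal, rot_mk, mul_inv_cancel_left]
  rw [← mul_inv_rev, invVal_inv hinv, invVal_inv hinv]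
  abel

lemma nuTotal_rev (hinv : ∀ g, σ g⁻¹ g = σ g g⁻¹) (p : G × G) :
    nuTotal σ (rev p) = nuTotal σ p := by
  obtain ⟨g, h⟩ := p
  simp only [nuTotal, rev_mk, ← mul_inv_rev, invVal_inv hinv]
  abel

lemma nuTotal_eq_of_sameOrbit (hinv : ∀ g, σ g⁻¹ g = σ g g⁻¹) {p q : G × G}
    (h : SameOrbit p q) : nuTotal σ q = nuTotal σ p := by
  rcases h with h | h
  · exact h.apply_eq (nuTotal_rot hinv)
  · rw [← nuTotal_rev hinv q]
    exact h.apply_eq (nuTotal_rot hinv)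

lemma nu_rot_of_not_isGeneric (h1 : ∀ g, σ 1 g = σ 1 1) (h1' : ∀ g, σ g 1 = σ 1 1)
    (hinv : ∀ g, σ g⁻¹ g = σ g g⁻¹) {p : G × G} (hp : ¬IsGeneric p) :
    nu σ (rot p) = nu σ p := by
  obtain ⟨g, h⟩ := p
  simp only [IsGeneric, not_and_or, not_not] at hp
  rcases hp with rfl | rfl | rfl <;> simp [nu, invVal, h1, h1', hinv, add_comm]

lemma nu_rev_add_of_not_isGeneric (h1 : ∀ g, σ 1 g = σ 1 1) (h1' : ∀ g, σ g 1 = σ 1 1)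
    (hinv : ∀ g, σ g⁻¹ g = σ g g⁻¹) {p : G × G} (hp : ¬IsGeneric p) :
    nu σ (rev p) + nu σ p = nuTotal σ p := by
  obtain ⟨g, h⟩ := p
  simp only [IsGeneric, not_and_or, not_not] at hp
  rcases hp with rfl | rfl | rfl <;> simp [nu, nuTotal, invVal, h1, h1', hinv] <;> abel

theorem _root_.IsPreCocycle.one_left (hσ : IsPreCocycle σ) (g : G) : σ 1 g = σ 1 1 := by
  have h := hσ 1 g g⁻¹ (by simp)
  simp only [d2, one_mul, mul_inv_cancel] at h
  linear_combination (norm := abel1) -h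

theorem _root_.IsPreCocycle.one_right (hσ : IsPreCocycle σ) (g : G) : σ g 1 = σ 1 1 := by
  have h := hσ g 1 1 (by simp)
  simp only [d2, mul_one] at h
  linear_combination (norm := abel1) -h

theorem _root_.IsPreCocycle.inv_comm (hσ : IsPreCocycle σ) (g : G) : σ g⁻¹ g = σ g g⁻¹ := by
  have h := hσ g g⁻¹ g (by simp)
  simp only [d2, mul_inv_cancel, inv_mul_cancel, hσ.one_left, hσ.one_right] at h
  linear_combination (norm := abel1) h

theorem _root_.IsPreCocycle.nu_rot (hσ : IsPreCocycle σ) (p : G × G) : nu σ (rot p) = nu σ p := by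
  obtain ⟨g, h⟩ := p
  have e := hσ g h (g * h)⁻¹ (by simp [mul_assoc])
  simp only [d2, nu, rot_mk, invVal, mul_inv_cancel_left, mul_inv_rev, inv_inv,
    hσ.inv_comm] at e ⊢
  linear_combination (norm := abel1) e

theorem _root_.IsPreCocycle.nu_rev_add (hσ : IsPreCocycle σ) (p : G × G) :
    nu σ (rev p) + nu σ p = nuTotal σ p := by
  obtain ⟨g, h⟩ := p
  have e := hσ h⁻¹ h (g * h)⁻¹ (by simp)
  have r := hσ.nu_rot (g, h)
  have i := hσ.inv_comm (g * h)
  simp only [d2, nu, nuTotal, rot_mk, rev_mk, invVal, mul_inv_cancel_left, mul_inv_rev,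
    inv_mul_cancel, inv_inv, hσ.one_left, hσ.inv_comm] at e r i ⊢
  linear_combination (norm := abel1) e - r + i

theorem isPreCocycle_of (h1 : ∀ g, σ 1 g = σ 1 1) (h1' : ∀ g, σ g 1 = σ 1 1)
    (hinv : ∀ g, σ g⁻¹ g = σ g g⁻¹) (hrot : ∀ p, IsGeneric p → nu σ (rot p) = nu σ p)
    (hrev : ∀ p, IsGeneric p → nu σ (rev p) + nu σ p = nuTotal σ p) : IsPreCocycle σ := by
  have hrot' (p : G × G) : nu σ (rot p) = nu σ p := by
    by_cases hp : IsGeneric p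
    exacts [hrot p hp, nu_rot_of_not_isGeneric h1 h1' hinv hp]
  have hrev' (p : G × G) : nu σ (rev p) + nu σ p = nuTotal σ p := by
    by_cases hp : IsGeneric p
    exacts [hrev p hp, nu_rev_add_of_not_isGeneric h1 h1' hinv hp]
  intro x y z hmem
  simp only [Set.mem_insert_iff, Set.mem_singleton_iff] at hmem
  rcases hmem with rfl | rfl | rfl | h | h | h
  · simp [d2, h1]
  · simp [d2, h1, h1']
  · simp [d2, h1']
  · obtain rfl := eq_inv_of_mul_eq_one_left h.symm
    have a := hrev' (y, z)
    have b := hrot' (rev (y, z))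
    simp only [d2, nu, nuTotal, invVal, rot_mk, rev_mk, mul_inv_rev, inv_inv, inv_mul_cancel,
      inv_mul_cancel_left, h1, hinv] at a b ⊢
    linear_combination (norm := abel1) a + b
  · obtain rfl := eq_inv_of_mul_eq_one_right h.symm
    have a := hrev' (x, y)
    have b := hrot' (rev (x, y))
    have c := hrot' (rot (rev (x, y)))
    simp only [d2, nu, nuTotal, invVal, rot_mk, rev_mk, mul_inv_rev, inv_inv, mul_inv_cancel,
      inv_mul_cancel_right, mul_inv_cancel_right, h1'] at a b c ⊢
    linear_combination (norm := abel1) -a - b - c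
  · obtain rfl := eq_inv_of_mul_eq_one_right h.symm
    have a := hrot' (x, y)
    simp only [d2, nu, invVal, rot_mk, mul_inv_rev, inv_inv, mul_inv_cancel_left, hinv] at a ⊢
    linear_combination (norm := abel1) a

theorem _root_.IsPreCocycle.eq_of_pairRel (hσ : IsPreCocycle σ) {p q : G × G} (h : pairRel G p q)
    (hp : ¬IsGeneric p) : σ p.1 p.2 = σ q.1 q.2 := by
  cases h with
  | left g => exact hσ.one_right g
  | right g => exact hσ.one_left g
  | inv g => exact (hσ.inv_comm g).symm
  | cyc g h hg hh hgh => exact absurd ⟨hg, hh, hgh⟩ hp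
  | swap g h hg hh hgh => exact absurd ⟨hg, hh, hgh⟩ hp

theorem _root_.IsPreCocycle.eq_of_mk_eq (hσ : IsPreCocycle σ) {p q : G × G} (hp : ¬IsGeneric p)
    (h : Quot.mk (pairRel G) p = Quot.mk _ q) : σ p.1 p.2 = σ q.1 q.2 :=
  (Quot.eqvGen_exact h).rel_of_invariant (s := fun a b => σ a.1 a.2 = σ b.1 b.2)
    ⟨fun _ => rfl, Eq.symm, Eq.trans⟩ (fun _ _ h => not_congr (isGeneric_iff_of_pairRel h))
    (fun _ _ h => hσ.eq_of_pairRel h) hp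

def IsPositive (p : G × G) : Prop := SameTriangle p (Quot.mk (pairRel G) p).out

lemma isPositive_rot {p : G × G} (hp : IsGeneric p) : IsPositive (rot p) ↔ IsPositive p := by
  have e := sameTriangle_equivalence (G := G)
  rw [IsPositive, IsPositive, mk_rot hp]
  exact ⟨e.trans (sameTriangle_rot p), e.trans (e.symm (sameTriangle_rot p))⟩

lemma isPositive_rev {p : G × G} (hp : IsGeneric p) : IsPositive (rev p) ↔ ¬IsPositive p := by
  have e := sameTriangle_equivalence (G := G)
  rw [IsPositive, IsPositive, mk_rev hp]
  refine ⟨fun h hpos => not_sameTriangle_rev hp (e.trans hpos (e.symm h)), fun hneg => ?_⟩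
  have hr := (sameOrbit_of_mk_eq hp (Quot.out_eq _).symm).resolve_left hneg
  exact e.symm (by simpa using hr.rev)

lemma isPositive_out (ω : Quot (pairRel G)) : IsPositive ω.out := by
  rw [IsPositive, Quot.out_eq]
  exact sameTriangle_equivalence.refl _

def pull {β : Type*} (f : Quot (pairRel G) → β) (g h : G) : β := f (Quot.mk _ (g, h))

section Pull

variable {β : Type*} (f : Quot (pairRel G) → β)

lemma pull_one_left (g : G) : pull f 1 g = pull f 1 1 :=
  congrArg f (Quot.sound (pairRel.right g))

lemma pull_one_right (g : G) : pull f g 1 = pull f 1 1 :=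
  congrArg f (Quot.sound (pairRel.left g))

lemma pull_inv_comm (g : G) : pull f g⁻¹ g = pull f g g⁻¹ :=
  congrArg f (Quot.sound (pairRel.inv g)).symm

lemma pull_rot {p : G × G} (hp : IsGeneric p) : pull f (rot p).1 (rot p).2 = pull f p.1 p.2 :=
  congrArg f (mk_rot hp)

lemma pull_rev {p : G × G} (hp : IsGeneric p) : pull f (rev p).1 (rev p).2 = pull f p.1 p.2 :=
  congrArg f (mk_rev hp)

end Pull

open scoped Classical in
/-- On the triangle not containing the chosen representative, the value is forced by
`IsPreCocycle.nu_rev_add`. -/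
noncomputable def orient (τ : G → G → A) (p : G × G) : A :=
  if IsPositive p then τ p.1 p.2 else nuTotal τ p - τ p.1 p.2

open scoped Classical in
noncomputable def ofQuot (f : Quot (pairRel G) → A) (g h : G) : A :=
  if IsGeneric (g, h) then orient (pull f) (g, h) - invVal (pull f) (g * h) else pull f g h

open scoped Classical in
noncomputable def toQuot (σ : G → G → A) (ω : Quot (pairRel G)) : A :=
  if IsGeneric ω.out then nu σ ω.out else σ ω.out.1 ω.out.2

section OfQuot

variable (f : Quot (pairRel G) → A)

lemma ofQuot_of_not_isGeneric {p : G × G} (hp : ¬IsGeneric p) :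
    ofQuot f p.1 p.2 = pull f p.1 p.2 :=
  if_neg hp

lemma invVal_ofQuot : invVal (ofQuot f) = invVal (pull f) :=
  funext fun g => ofQuot_of_not_isGeneric f (p := (g, g⁻¹)) (not_isGeneric_inv g)

lemma nuTotal_ofQuot : nuTotal (ofQuot f) = nuTotal (pull f) := by
  funext p
  rw [nuTotal, nuTotal, invVal_ofQuot,
    ofQuot_of_not_isGeneric f (p := (1, 1)) (by simp [IsGeneric])]

lemma nu_ofQuot {p : G × G} (hp : IsGeneric p) : nu (ofQuot f) p = orient (pull f) p := by
  rw [nu, invVal_ofQuot, ofQuot, if_pos hp, sub_add_cancel]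

lemma orient_pull_rot {p : G × G} (hp : IsGeneric p) :
    orient (pull f) (rot p) = orient (pull f) p := by
  rw [orient, orient, isPositive_rot hp, pull_rot f hp, nuTotal_rot (pull_inv_comm f)]

lemma orient_pull_rev_add {p : G × G} (hp : IsGeneric p) :
    orient (pull f) (rev p) + orient (pull f) p = nuTotal (pull f) p := by
  by_cases hpos : IsPositive p <;>
    simp [orient, hpos, isPositive_rev hp, pull_rev f hp, nuTotal_rev (pull_inv_comm f)]

theorem isPreCocycle_ofQuot : IsPreCocycle (ofQuot f) := by
  have hng (g h : G) (hgh : ¬IsGeneric (g, h)) : ofQuot f g h = pull f g h :=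
    ofQuot_of_not_isGeneric f hgh
  refine isPreCocycle_of (fun g => ?_) (fun g => ?_) (fun g => ?_) (fun p hp => ?_) (fun p hp => ?_)
  · rw [hng 1 g (by simp [IsGeneric]), hng 1 1 (by simp [IsGeneric]), pull_one_left]
  · rw [hng g 1 (by simp [IsGeneric]), hng 1 1 (by simp [IsGeneric]), pull_one_right]
  · rw [hng g⁻¹ g (by simp [IsGeneric]), hng g g⁻¹ (by simp [IsGeneric]), pull_inv_comm]
  · rw [nu_ofQuot f hp.rot, nu_ofQuot f hp, orient_pull_rot f hp]
  · rw [nu_ofQuot f hp.rev, nu_ofQuot f hp, nuTotal_ofQuot, orient_pull_rev_add f hp]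

theorem toQuot_ofQuot : toQuot (ofQuot f) = f := by
  funext ω
  by_cases hω : IsGeneric ω.out
  · rw [toQuot, if_pos hω, nu_ofQuot f hω, orient, if_pos (isPositive_out ω), pull, Quot.out_eq]
  · rw [toQuot, if_neg hω, ofQuot_of_not_isGeneric f hω, pull, Quot.out_eq]

end OfQuot

lemma pull_toQuot (hσ : IsPreCocycle σ) {p : G × G} (hp : ¬IsGeneric p) :
    pull (toQuot σ) p.1 p.2 = σ p.1 p.2 := by
  have hr : Quot.mk (pairRel G) p = Quot.mk _ (Quot.mk (pairRel G) p).out := (Quot.out_eq _).symm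
  rw [pull, toQuot, if_neg ((isGeneric_iff_of_mk_eq hr).not.1 hp)]
  exact (hσ.eq_of_mk_eq hp hr).symm

lemma invVal_pull_toQuot (hσ : IsPreCocycle σ) : invVal (pull (toQuot σ)) = invVal σ :=
  funext fun g => pull_toQuot hσ (p := (g, g⁻¹)) (not_isGeneric_inv g)

lemma nuTotal_pull_toQuot (hσ : IsPreCocycle σ) : nuTotal (pull (toQuot σ)) = nuTotal σ := by
  funext p
  rw [nuTotal, nuTotal, invVal_pull_toQuot hσ, pull_toQuot hσ (p := (1, 1)) (by simp [IsGeneric])]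

lemma orient_pull_toQuot (hσ : IsPreCocycle σ) {p : G × G} (hp : IsGeneric p) :
    orient (pull (toQuot σ)) p = nu σ p := by
  set r := (Quot.mk (pairRel G) p).out
  have hr : SameOrbit p r := sameOrbit_of_mk_eq hp (Quot.out_eq _).symm
  have hpull : pull (toQuot σ) p.1 p.2 = nu σ r := by
    rw [pull, toQuot, if_pos ((isGeneric_iff_of_mk_eq (Quot.out_eq _).symm).1 hp)]
  rw [orient, hpull, nuTotal_pull_toQuot hσ]
  split_ifs with hpos
  · exact hpos.apply_eq hσ.nu_rot
  · rw [← nuTotal_eq_of_sameOrbit hσ.inv_comm hr, ← hσ.nu_rev_add r, add_sub_cancel_right]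
    exact (hr.resolve_left hpos).apply_eq hσ.nu_rot

theorem ofQuot_toQuot (hσ : IsPreCocycle σ) : ofQuot (toQuot σ) = σ := by
  funext g h
  by_cases hp : IsGeneric (g, h)
  · rw [ofQuot, if_pos hp, orient_pull_toQuot hσ hp, invVal_pull_toQuot hσ, nu,
      add_sub_cancel_right]
  · exact (ofQuot_of_not_isGeneric _ hp).trans (pull_toQuot hσ hp)

theorem toQuot_add (σ τ : G → G → A) : toQuot (σ + τ) = toQuot σ + toQuot τ := by
  funext ω
  simp only [toQuot, nu, invVal, Pi.add_apply]
  split_ifs <;> abel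

variable (G A) in
noncomputable def equivFun : preZ2 G A ≃+ (Quot (pairRel G) → A) where
  toFun σ := toQuot σ
  invFun f := ⟨ofQuot f, isPreCocycle_ofQuot f⟩
  left_inv σ := Subtype.ext (ofQuot_toQuot σ.2)
  right_inv := toQuot_ofQuot
  map_add' σ τ := toQuot_add (σ : G → G → A) τ

end PreZ2

/-- `pZ²(G,A)` is isomorphic to the group of all functions `Ω → A`, where
`Ω = (G × G)/∼`. -/
theorem preZ2_equiv_functions :
    Nonempty (preZ2 G A ≃+ (Quot (pairRel G) → A)) :=
  ⟨PreZ2.equivFun G A⟩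
end

section
/- If G is a finite group of order n, with G_{(2)} and G_{(3)} the sets of elements of order 2 and 3 respectively, then the number of equivalence classes of the relation ∼ on G×G equals m = (n² + 2|G_{(3)}| + 3|G_{(2)}| + 5)/6. -/
variable (G : Type*) [Group G] (A : Type*) [AddCommGroup A]

variable {G A}

variable (G A)

/-!
Write a pair `(g, h)` as the triangle `(g, h, (gh)⁻¹)` of elements with product one. The generators
`cyc` and `swap` of `∼` are a rotation and a reflection (which reverses the triangle and inverts its
entries), so on pairs with `g, h, gh ≠ 1` the classes of `∼` are the orbits of an action of the
dihedral group `D₃`. The other pairs form one class containing every `(g, 1)` and `(1, g)`, and the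
classes `{(g, g⁻¹), (g⁻¹, g)}`. Give each class total weight 6, spread over its elements; on an
orbit the stabiliser orders do this, by orbit–stabiliser. Six times the number of classes is then
the total weight, and a stabiliser is trivial except at `(g, g)` with `g³ = 1`, where it has
order 3.
-/

open Finset

open scoped Classical in
theorem Quot.mul_card_eq_sum_of_classes {α : Type*} [Fintype α] {r : α → α → Prop}
    (C : α → Set α) (hC : ∀ a b, r a b → C a = C b) (hmem : ∀ a, a ∈ C a)
    (hmk : ∀ a b, b ∈ C a → Quot.mk r b = Quot.mk r a) (w : α → ℕ) {k : ℕ}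
    (hw : ∀ a, ∑ b with b ∈ C a, w b = k) :
    k * Nat.card (Quot r) = ∑ a, w a := by
  have hcls : ∀ a b, Quot.mk r b = Quot.mk r a ↔ b ∈ C a := fun a b =>
    ⟨fun h => by
      have hba : C b = C a := congrArg (Quot.lift C hC) h
      exact hba ▸ hmem b, hmk a b⟩
  have := Fintype.ofFinite (Quot r)
  rw [← sum_fiberwise univ (Quot.mk r) w, Nat.card_eq_fintype_card, ← card_univ, mul_comm,
    ← smul_eq_mul, ← sum_const]
  refine sum_congr rfl fun q _ => ?_
  obtain ⟨a, rfl⟩ := Quot.exists_rep q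
  simp only [hcls, hw]

open scoped Classical in
theorem MulAction.sum_card_stabilizer_orbit {M α : Type*} [Group M] [Finite M] [MulAction M α]
    [Fintype α] (a : α) :
    ∑ b with b ∈ orbit M a, Nat.card (stabilizer M b) = Nat.card M := by
  have key : ∀ b ∈ orbit M a, Nat.card (stabilizer M b) * (orbit M a).ncard = Nat.card M := by
    intro b hb
    rw [← orbit_eq_iff.mpr hb, ← index_stabilizer, Subgroup.card_mul_index]
  have hpos : 0 < (orbit M a).ncard := (Set.ncard_pos).mpr ⟨a, mem_orbit_self a⟩
  rw [sum_congr rfl fun b hb => Nat.eq_of_mul_eq_mul_right hpos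
    ((key b (mem_filter.mp hb).2).trans (key a (mem_orbit_self a)).symm), sum_const, smul_eq_mul,
    mul_comm, ← key a (mem_orbit_self a), Set.ncard_eq_toFinset_card']
  congr 2
  ext
  simp

namespace DihedralGroup

variable {n : ℕ} {G : Type*} [Group G]

/-- `f` labels the oriented edges of an `n`-gon; a reflection reverses the orientation, hence the
inverse. -/
abbrev arrowInvAction (n : ℕ) (G : Type*) [Group G] : MulAction (DihedralGroup n) (ZMod n → G) where
  smul
    | r k, f => fun i => f (i + k)
    | sr k, f => fun i => (f (k - i))⁻¹
  one_smul f := by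
    funext i
    show f (i + 0) = f i
    rw [add_zero]
  mul_smul := by
    rintro (a | a) (b | b) f <;> funext i
    · show f (i + (a + b)) = f (i + a + b)
      rw [add_assoc]
    · show (f (b - a - i))⁻¹ = (f (b - (i + a)))⁻¹
      ring_nf
    · show (f (a + b - i))⁻¹ = (f (a - i + b))⁻¹
      ring_nf
    · show f (i + (b - a)) = ((f (b - (a - i)))⁻¹)⁻¹
      rw [inv_inv]; ring_nf

attribute [local instance] arrowInvAction

theorem r_smul (k : ZMod n) (f : ZMod n → G) (i : ZMod n) : (r k • f) i = f (i + k) := rfl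
theorem sr_smul (k : ZMod n) (f : ZMod n → G) (i : ZMod n) : (sr k • f) i = (f (k - i))⁻¹ := rfl

theorem smul_prod_eq_one {f : ZMod 3 → G} (hf : f 0 * f 1 * f 2 = 1) (x : DihedralGroup 3) :
    (x • f) 0 * (x • f) 1 * (x • f) 2 = 1 := by
  have h1 : f 1 * f 2 * f 0 = 1 := by rw [mul_eq_one_comm, ← mul_assoc, hf]
  have h2 : f 2 * f 0 * f 1 = 1 := by rw [mul_assoc, mul_eq_one_comm, hf]
  rcases x with k | k <;> fin_cases k
  · exact hf
  · exact h1
  · exact h2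
  · show (f 0)⁻¹ * (f 2)⁻¹ * (f 1)⁻¹ = 1
    simpa only [← mul_inv_rev, inv_eq_one, ← mul_assoc] using h1
  · show (f 1)⁻¹ * (f 0)⁻¹ * (f 2)⁻¹ = 1
    simpa only [← mul_inv_rev, inv_eq_one, ← mul_assoc] using h2
  · show (f 2)⁻¹ * (f 1)⁻¹ * (f 0)⁻¹ = 1
    simpa only [← mul_inv_rev, inv_eq_one, ← mul_assoc] using hf

theorem smul_ne_one {f : ZMod n → G} (hf : ∀ i, f i ≠ 1) (x : DihedralGroup n) (i : ZMod n) :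
    (x • f) i ≠ 1 := by
  rcases x with k | k
  · rw [r_smul]
    exact hf (i + k)
  · rw [sr_smul]
    exact inv_ne_one.mpr (hf (k - i))

theorem sum_univ_three {M : Type*} [AddCommMonoid M] (φ : DihedralGroup 3 → M) :
    ∑ x, φ x = φ (r 0) + φ (r 1) + φ (r 2) + (φ (sr 0) + φ (sr 1) + φ (sr 2)) := by
  rw [← equivSum.symm.sum_comp, Fintype.sum_sum_type]
  exact congrArg₂ (· + ·) (Fin.sum_univ_three _) (Fin.sum_univ_three _)

end DihedralGroup

open DihedralGroup

attribute [local instance] arrowInvAction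

section

variable {G : Type*} [Group G]

def toTriple (p : G × G) : ZMod 3 → G := ![p.1, p.2, (p.1 * p.2)⁻¹]

theorem toTriple_prod_eq_one (p : G × G) : toTriple p 0 * toTriple p 1 * toTriple p 2 = 1 :=
  mul_inv_cancel (p.1 * p.2)

theorem toTriple_smul_toTriple (x : DihedralGroup 3) (p : G × G) :
    toTriple ((x • toTriple p) 0, (x • toTriple p) 1) = x • toTriple p := by
  funext i
  fin_cases i
  · rfl
  · rfl
  · exact (eq_inv_of_mul_eq_one_right (smul_prod_eq_one (toTriple_prod_eq_one p) x)).symm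

abbrev pairAction : MulAction (DihedralGroup 3) (G × G) where
  smul x p := ((x • toTriple p) 0, (x • toTriple p) 1)
  one_smul p := rfl
  mul_smul x y p := by
    change (((x * y) • toTriple p) 0, ((x * y) • toTriple p) 1) =
      ((x • toTriple ((y • toTriple p) 0, (y • toTriple p) 1)) 0,
        (x • toTriple ((y • toTriple p) 0, (y • toTriple p) 1)) 1)
    rw [toTriple_smul_toTriple, mul_smul]

attribute [local instance] pairAction

theorem toTriple_smul (x : DihedralGroup 3) (p : G × G) : toTriple (x • p) = x • toTriple p :=
  toTriple_smul_toTriple x p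

theorem r_zero_smul (p : G × G) : (r 0 : DihedralGroup 3) • p = p := rfl
theorem r_one_smul (g h : G) : (r 1 : DihedralGroup 3) • (g, h) = (h, (g * h)⁻¹) := rfl
theorem r_two_smul (g h : G) : (r 2 : DihedralGroup 3) • (g, h) = ((g * h)⁻¹, g) := rfl
theorem sr_zero_smul (g h : G) : (sr 0 : DihedralGroup 3) • (g, h) = (g⁻¹, g * h) := by
  show (g⁻¹, ((g * h)⁻¹)⁻¹) = _; rw [inv_inv]
theorem sr_one_smul (g h : G) : (sr 1 : DihedralGroup 3) • (g, h) = (h⁻¹, g⁻¹) := rfl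
theorem sr_two_smul (g h : G) : (sr 2 : DihedralGroup 3) • (g, h) = (g * h, h⁻¹) := by
  show (((g * h)⁻¹)⁻¹, h⁻¹) = _; rw [inv_inv]

def IsGeneric (p : G × G) : Prop := p.1 ≠ 1 ∧ p.2 ≠ 1 ∧ p.1 * p.2 ≠ 1

theorem isGeneric_iff_toTriple {p : G × G} : IsGeneric p ↔ ∀ i, toTriple p i ≠ 1 := by
  refine ⟨fun ⟨h1, h2, h3⟩ i => ?_, fun h => ⟨h 0, h 1, inv_ne_one.mp (h 2)⟩⟩
  fin_cases i
  exacts [h1, h2, inv_ne_one.mpr h3]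

theorem IsGeneric.smul {p : G × G} (hp : IsGeneric p) (x : DihedralGroup 3) :
    IsGeneric (x • p) := by
  rw [isGeneric_iff_toTriple, toTriple_smul] at *
  exact smul_ne_one hp x

theorem mk_smul_eq_mk (x : DihedralGroup 3) {p : G × G} (hp : IsGeneric p) :
    Quot.mk (pairRel G) (x • p) = Quot.mk (pairRel G) p := by
  let P (x : DihedralGroup 3) : Prop :=
    ∀ p : G × G, IsGeneric p → Quot.mk (pairRel G) (x • p) = Quot.mk (pairRel G) p
  have hmul {x y} (hx : P x) (hy : P y) : P (x * y) := fun p hp => by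
    rw [mul_smul, hx _ (hp.smul y), hy p hp]
  have hr : P (r 1) := by
    rintro ⟨g, h⟩ ⟨hg, hh, hgh⟩
    rw [r_one_smul, mul_inv_rev]
    exact (Quot.sound (pairRel.cyc g h hg hh fun e => hgh (by rw [e, mul_inv_cancel]))).symm
  have hs : P (sr 1) := by
    rintro ⟨g, h⟩ ⟨hg, hh, hgh⟩
    rw [sr_one_smul]
    exact (Quot.sound (pairRel.swap g h hg hh fun e => hgh (by rw [e, mul_inv_cancel]))).symm
  suffices hx : P x from hx p hp
  rcases x with k | k <;> fin_cases k
  · exact fun p _ => rfl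
  · exact hr
  · exact hmul hr hr
  · exact hmul hs (hmul hr hr)
  · exact hs
  · exact hmul hs hr

theorem isGeneric_iff_not_or {p : G × G} :
    IsGeneric p ↔ ¬(p.1 = 1 ∨ p.2 = 1) ∧ p.1 * p.2 ≠ 1 := by
  rw [IsGeneric, not_or, and_assoc]

open Classical in
def pairClass (p : G × G) : Set (G × G) :=
  if p.1 = 1 ∨ p.2 = 1 then {q | q.1 = 1 ∨ q.2 = 1}
  else if p.1 * p.2 = 1 then {p, p.swap}
  else MulAction.orbit (DihedralGroup 3) p

theorem pairClass_of_one_mem {p : G × G} (hp : p.1 = 1 ∨ p.2 = 1) :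
    pairClass p = {q | q.1 = 1 ∨ q.2 = 1} := if_pos hp

theorem pairClass_of_mul_eq_one {p : G × G} (h1 : p.1 ≠ 1) (hp : p.1 * p.2 = 1) :
    pairClass p = {p, p.swap} := by
  have h2 : p.2 ≠ 1 := fun h => h1 (by simpa [h] using hp)
  rw [pairClass, if_neg (by tauto), if_pos hp]

theorem pairClass_of_isGeneric {p : G × G} (hp : IsGeneric p) :
    pairClass p = MulAction.orbit (DihedralGroup 3) p := by
  obtain ⟨h1, h2, h3⟩ := hp
  rw [pairClass, if_neg (by tauto), if_neg h3]

theorem pairClass_eq_of_pairRel {p q : G × G} (h : pairRel G p q) : pairClass p = pairClass q := by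
  cases h with
  | left g => rw [pairClass_of_one_mem (Or.inr rfl), pairClass_of_one_mem (Or.inl rfl)]
  | right g => rw [pairClass_of_one_mem (Or.inl rfl), pairClass_of_one_mem (Or.inl rfl)]
  | inv g =>
    rcases eq_or_ne g 1 with rfl | hg
    · rw [pairClass_of_one_mem (Or.inl rfl), pairClass_of_one_mem (Or.inl inv_one)]
    · rw [pairClass_of_mul_eq_one hg (mul_inv_cancel g),
        pairClass_of_mul_eq_one (inv_ne_one.mpr hg) (inv_mul_cancel g)]
      exact Set.pair_comm _ _
  | cyc g h hg hh hgh =>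
    have hp : IsGeneric (g, h) := ⟨hg, hh, fun e => hgh (eq_inv_of_mul_eq_one_right e)⟩
    have hq : (h, h⁻¹ * g⁻¹) = (r 1 : DihedralGroup 3) • (g, h) := by
      rw [r_one_smul, mul_inv_rev]
    rw [hq, pairClass_of_isGeneric hp, pairClass_of_isGeneric (hp.smul _), MulAction.orbit_smul]
  | swap g h hg hh hgh =>
    have hp : IsGeneric (g, h) := ⟨hg, hh, fun e => hgh (eq_inv_of_mul_eq_one_right e)⟩
    rw [← sr_one_smul, pairClass_of_isGeneric hp, pairClass_of_isGeneric (hp.smul _),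
      MulAction.orbit_smul]

theorem mem_pairClass_self (p : G × G) : p ∈ pairClass p := by
  by_cases h1 : p.1 = 1 ∨ p.2 = 1
  · rw [pairClass_of_one_mem h1]; exact h1
  by_cases h2 : p.1 * p.2 = 1
  · rw [pairClass_of_mul_eq_one (fun h => h1 (Or.inl h)) h2]; exact Set.mem_insert _ _
  · rw [pairClass_of_isGeneric (isGeneric_iff_not_or.mpr ⟨h1, h2⟩)]
    exact MulAction.mem_orbit_self p

theorem mk_eq_one_one_of_one_mem {p : G × G} (hp : p.1 = 1 ∨ p.2 = 1) :
    Quot.mk (pairRel G) p = Quot.mk (pairRel G) (1, 1) := by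
  obtain ⟨g, h⟩ := p
  rcases hp with rfl | rfl
  exacts [Quot.sound (pairRel.right h), Quot.sound (pairRel.left g)]

theorem mk_eq_of_mem_pairClass {p q : G × G} (hq : q ∈ pairClass p) :
    Quot.mk (pairRel G) q = Quot.mk (pairRel G) p := by
  by_cases h1 : p.1 = 1 ∨ p.2 = 1
  · rw [pairClass_of_one_mem h1] at hq
    rw [mk_eq_one_one_of_one_mem hq, mk_eq_one_one_of_one_mem h1]
  by_cases h2 : p.1 * p.2 = 1
  · rw [pairClass_of_mul_eq_one (fun h => h1 (Or.inl h)) h2] at hq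
    obtain ⟨g, h⟩ := p
    obtain rfl : h = g⁻¹ := eq_inv_of_mul_eq_one_right h2
    rcases hq with rfl | rfl
    exacts [rfl, (Quot.sound (pairRel.inv g)).symm]
  · have hp := isGeneric_iff_not_or.mpr ⟨h1, h2⟩
    rw [pairClass_of_isGeneric hp] at hq
    obtain ⟨x, rfl⟩ := hq
    exact mk_smul_eq_mk x hp

open Classical in
theorem card_stabilizer_of_isGeneric {p : G × G} (hp : IsGeneric p) :
    Nat.card (MulAction.stabilizer (DihedralGroup 3) p) =
      if p.1 = p.2 ∧ p.1 ^ 3 = 1 then 3 else 1 := by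
  obtain ⟨g, h⟩ := p
  obtain ⟨hg, hh, hgh⟩ := hp
  have hcube : (g * g)⁻¹ = g ↔ g ^ 3 = 1 := by
    rw [inv_eq_iff_mul_eq_one, pow_three, mul_assoc]
  rw [Nat.card_eq_fintype_card, Fintype.card_subtype, card_filter, sum_univ_three]
  simp only [MulAction.mem_stabilizer_iff, r_zero_smul, r_one_smul, r_two_smul, sr_zero_smul,
    sr_one_smul, sr_two_smul, Prod.mk.injEq]
  have hr1 : (h = g ∧ (g * h)⁻¹ = h) ↔ (g = h ∧ g ^ 3 = 1) := by
    constructor <;> rintro ⟨rfl, e⟩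
    exacts [⟨rfl, hcube.mp e⟩, ⟨rfl, hcube.mpr e⟩]
  have hr2 : ((g * h)⁻¹ = g ∧ g = h) ↔ (g = h ∧ g ^ 3 = 1) := by
    constructor
    · rintro ⟨e, rfl⟩; exact ⟨rfl, hcube.mp e⟩
    · rintro ⟨rfl, e⟩; exact ⟨hcube.mpr e, rfl⟩
  have hsr0 : ¬(g⁻¹ = g ∧ g * h = h) := fun e => hg (mul_eq_right.mp e.2)
  have hsr1 : ¬(h⁻¹ = g ∧ g⁻¹ = h) := fun e => hgh (by rw [← e.1, inv_mul_cancel])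
  have hsr2 : ¬(g * h = g ∧ h⁻¹ = h) := fun e => hh (mul_eq_left.mp e.1)
  simp only [if_true, if_neg hsr0, if_neg hsr1, if_neg hsr2, hr1, hr2]
  split_ifs <;> rfl

open Classical in
/-- `6 / #(class of p)`, except that the degenerate class carries all its weight at `(1, 1)`; on a
generic pair this is the order of the stabiliser. -/
noncomputable def pairWeight (p : G × G) : ℕ :=
  (if p.1 * p.2 = 1 then if p.1 = p.2 then 6 else 3 else 0) +
    if IsGeneric p then Nat.card (MulAction.stabilizer (DihedralGroup 3) p) else 0

open Classical in
theorem pairWeight_of_mul_eq_one {p : G × G} (hp : p.1 * p.2 = 1) :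
    pairWeight p = if p.1 = p.2 then 6 else 3 := by
  rw [pairWeight, if_pos hp, if_neg fun h : IsGeneric p => h.2.2 hp, add_zero]

theorem pairWeight_of_isGeneric {p : G × G} (hp : IsGeneric p) :
    pairWeight p = Nat.card (MulAction.stabilizer (DihedralGroup 3) p) := by
  rw [pairWeight, if_neg hp.2.2, if_pos hp, zero_add]

theorem pairWeight_of_one_mem {p : G × G} (hp : p.1 = 1 ∨ p.2 = 1) (hne : p.1 * p.2 ≠ 1) :
    pairWeight p = 0 := by
  rw [pairWeight, if_neg hne, if_neg fun h => hp.elim h.1 h.2.1]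

open Classical in
theorem sum_pairWeight_pairClass [Fintype G] (p : G × G) :
    ∑ q with q ∈ pairClass p, pairWeight q = 6 := by
  by_cases h1 : p.1 = 1 ∨ p.2 = 1
  · rw [pairClass_of_one_mem h1, sum_eq_single_of_mem (1, 1) (by simp),
      pairWeight_of_mul_eq_one (mul_one 1), if_pos rfl]
    rintro ⟨g, h⟩ hq hne
    refine pairWeight_of_one_mem (by simpa using hq) ?_
    rcases (by simpa using hq : g = 1 ∨ h = 1) with rfl | rfl
    · simpa using hne
    · simpa using hne
  by_cases h2 : p.1 * p.2 = 1
  · have hswap : p.swap.1 * p.swap.2 = 1 := mul_eq_one_comm.mp h2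
    rw [pairClass_of_mul_eq_one (fun h => h1 (Or.inl h)) h2,
      sum_congr (s₂ := {p, p.swap}) (by ext; simp) fun _ _ => rfl]
    by_cases h3 : p.1 = p.2
    · have : p.swap = p := Prod.ext h3.symm h3
      rw [this, insert_eq_of_mem (mem_singleton_self p), sum_singleton,
        pairWeight_of_mul_eq_one h2, if_pos h3]
    · have hne : p ≠ p.swap := fun e => h3 (congrArg Prod.fst e)
      rw [sum_pair hne, pairWeight_of_mul_eq_one h2, pairWeight_of_mul_eq_one hswap,
        if_neg h3, if_neg (show ¬p.swap.1 = p.swap.2 from Ne.symm h3)]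
  · have hp := isGeneric_iff_not_or.mpr ⟨h1, h2⟩
    rw [pairClass_of_isGeneric hp]
    refine (sum_congr rfl fun q hq => ?_).trans
      ((MulAction.sum_card_stabilizer_orbit p).trans DihedralGroup.nat_card)
    obtain ⟨x, rfl⟩ := (mem_filter.mp hq).2
    exact pairWeight_of_isGeneric (hp.smul x)

theorem six_mul_card_quot_pairRel [Fintype G] :
    6 * Nat.card (Quot (pairRel G)) = ∑ p : G × G, pairWeight p :=
  Quot.mul_card_eq_sum_of_classes (pairClass (G := G)) (fun _ _ => pairClass_eq_of_pairRel)
    mem_pairClass_self (fun _ _ => mk_eq_of_mem_pairClass) pairWeight sum_pairWeight_pairClass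

open Classical in
/-- Inclusion–exclusion over the lines `g = 1`, `h = 1`, `gh = 1`, which meet only at `(1, 1)`. -/
theorem pairWeight_add_ite_eq (p : G × G) :
    pairWeight p + (if p.1 = 1 then 1 else 0) + (if p.2 = 1 then 1 else 0) =
      1 + (if p = (1, 1) then 5 else 0) + (if p.1 * p.2 = 1 then 2 else 0) +
        (if p.1 = p.2 ∧ p.1 ^ 2 = 1 ∧ p.1 ≠ 1 then 3 else 0) +
        (if p.1 = p.2 ∧ p.1 ^ 3 = 1 ∧ p.1 ≠ 1 then 2 else 0) := by
  obtain ⟨g, h⟩ := p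
  by_cases hg : g = 1
  · subst hg
    by_cases hh : h = 1
    · subst hh
      simp [pairWeight_of_mul_eq_one]
    · rw [pairWeight_of_one_mem (Or.inl rfl) (by simpa using hh)]
      simp [hh, Ne.symm hh]
  by_cases hh : h = 1
  · subst hh
    rw [pairWeight_of_one_mem (Or.inr rfl) (by simpa using hg)]
    simp [hg]
  have hne : (g, h) ≠ (1, 1) := fun e => hg (congrArg Prod.fst e)
  by_cases hgh : g * h = 1
  · obtain rfl : h = g⁻¹ := eq_inv_of_mul_eq_one_right hgh
    have hsq : g = g⁻¹ ↔ g ^ 2 = 1 := by rw [eq_inv_iff_mul_eq_one, pow_two]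
    have hsq' : (g = g⁻¹ ∧ g ^ 2 = 1 ∧ g ≠ 1) ↔ g = g⁻¹ := ⟨And.left, fun e => ⟨e, hsq.mp e, hg⟩⟩
    have hcube : ¬(g = g⁻¹ ∧ g ^ 3 = 1 ∧ g ≠ 1) := fun ⟨e, h3, _⟩ => by
      rw [pow_succ, hsq.mp e, one_mul] at h3
      exact hg h3
    rw [pairWeight_of_mul_eq_one hgh]
    simp only [if_neg hg, if_neg hh, if_neg hne, if_pos hgh, hsq', if_neg hcube]
    split_ifs <;> rfl
  · have hp : IsGeneric (g, h) := ⟨hg, hh, hgh⟩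
    have hsq : ¬(g = h ∧ g ^ 2 = 1 ∧ g ≠ 1) := fun ⟨e, h2, _⟩ => hgh (by rwa [← e, ← pow_two])
    have hcube : (g = h ∧ g ^ 3 = 1 ∧ g ≠ 1) ↔ (g = h ∧ g ^ 3 = 1) :=
      ⟨fun e => ⟨e.1, e.2.1⟩, fun e => ⟨e.1, e.2, hg⟩⟩
    rw [pairWeight_of_isGeneric hp, card_stabilizer_of_isGeneric hp]
    simp only [if_neg hg, if_neg hh, if_neg hne, if_neg hgh, if_neg hsq, hcube]
    split_ifs <;> rfl

open Classical in
theorem sum_pairWeight [Fintype G] :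
    ∑ p : G × G, pairWeight p = Fintype.card G ^ 2 + 2 * #{g : G | g ^ 3 = 1 ∧ g ≠ 1} +
      3 * #{g : G | g ^ 2 = 1 ∧ g ≠ 1} + 5 := by
  have hfst : ∑ p : G × G, (if p.1 = 1 then 1 else 0) = Fintype.card G := by
    rw [Fintype.sum_prod_type, Fintype.sum_eq_single 1 fun g hg => by simp [hg]]
    simp
  have hsnd : ∑ p : G × G, (if p.2 = 1 then 1 else 0) = Fintype.card G := by
    rw [Fintype.sum_prod_type]
    simp
  have hone : ∑ p : G × G, (if p = (1, 1) then 5 else 0) = 5 := by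
    simp
  have hanti : ∑ p : G × G, (if p.1 * p.2 = 1 then 2 else 0) = 2 * Fintype.card G := by
    simp [Fintype.sum_prod_type, mul_eq_one_iff_eq_inv', mul_comm]
  have hdiag (P : G → Prop) [DecidablePred P] (c : ℕ) :
      ∑ p : G × G, (if p.1 = p.2 ∧ P p.1 then c else 0) = c * #{g | P g} := by
    simp only [Fintype.sum_prod_type, ite_and, sum_ite_eq, mem_univ, if_true]
    rw [← sum_filter, sum_const, smul_eq_mul, mul_comm]
  have hdiag2 := hdiag (fun g => g ^ 2 = 1 ∧ g ≠ 1) 3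
  have hdiag3 := hdiag (fun g => g ^ 3 = 1 ∧ g ≠ 1) 2
  beta_reduce at hdiag2 hdiag3
  have h := Fintype.sum_congr _ _ (pairWeight_add_ite_eq (G := G))
  simp only [sum_add_distrib, hfst, hsnd, hone, hanti, hdiag2, hdiag3, sum_const, card_univ,
    Fintype.card_prod, smul_eq_mul] at h
  rw [sq]
  linarith

open Classical in
theorem card_orderOf_eq_prime [Fintype G] (p : ℕ) [Fact p.Prime] :
    Nat.card {g : G // orderOf g = p} = #{g : G | g ^ p = 1 ∧ g ≠ 1} := by
  simp only [Nat.card_eq_fintype_card, Fintype.card_subtype, orderOf_eq_prime_iff]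

end

/-- For a finite group `G` of order `n`, the number of `∼`-classes equals
`(n² + 2|G₍₃₎| + 3|G₍₂₎| + 5)/6` (the division being exact). -/
theorem card_pairRel_classes [Fintype G] :
    6 * Nat.card (Quot (pairRel G)) =
      Fintype.card G ^ 2 + 2 * Nat.card {g : G // orderOf g = 3} +
        3 * Nat.card {g : G // orderOf g = 2} + 5 := by
  rw [six_mul_card_quot_pairRel, sum_pairWeight, card_orderOf_eq_prime, card_orderOf_eq_prime]
end
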